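/- arXiv:1301.2220 — 3 statements merged into one kernel-verified Lean document; each statement's English description precedes it below -/
import Mathlib

section
/- Define v_N = (1/λ²) ∑_{i=1}^{N−1} 1/(i(N−i))² for λ > 0 and integer N ≥ 2. Then v_{N+1} < v_N for all N ≥ 2. -/
open Finset

lemma per_term (m x : ℝ) (hx : 0 ≤ x) (hxm : x ≤ m) :
    (1/((m+1)^2)) * (1/(x+1)^2 - 1/(x+2)^2)
      ≤ 1/((x+1)*(m+1-x))^2 - 1/((x+2)*(m+1-x))^2 := by
  have hr : 0 < m + 1 - x := by linarith
  have h1 : 1/((x+1)*(m+1-x))^2 - 1/((x+2)*(m+1-x))^2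
      = (1/(m+1-x)^2) * (1/(x+1)^2 - 1/(x+2)^2) := by
    have h2 : (x+1) ≠ 0 := by linarith
    have h3 : (x+2) ≠ 0 := by linarith
    field_simp
  rw [h1]
  apply mul_le_mul_of_nonneg_right
  · apply one_div_le_one_div_of_le (by positivity)
    nlinarith
  · have : 1/(x+2)^2 ≤ 1/(x+1)^2 := by
      apply one_div_le_one_div_of_le (by positivity)
      nlinarith
    linarith

/-- `v_N = (1/λ²) ∑_{i=1}^{N−1} 1/(i(N−i))²` is strictly decreasing for `N ≥ 2`. -/
theorem stmt_8 (lam : ℝ) (hlam : 0 < lam) (N : ℕ) (hN : 2 ≤ N) :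
    (1 / lam ^ 2) * ∑ i ∈ Finset.Ico 1 (N + 1), 1 / ((i : ℝ) * ((N : ℝ) + 1 - (i : ℝ))) ^ 2
      < (1 / lam ^ 2) * ∑ i ∈ Finset.Ico 1 N, 1 / ((i : ℝ) * ((N : ℝ) - (i : ℝ))) ^ 2 := by
  have hl : (0:ℝ) < 1 / lam ^ 2 := by positivity
  apply mul_lt_mul_of_pos_left _ hl
  obtain ⟨M, rfl⟩ : ∃ M, N = M + 2 := ⟨N - 2, by omega⟩
  rw [Finset.sum_Ico_eq_sum_range, Finset.sum_Ico_eq_sum_range]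
  norm_num
  rw [show M + 2 = (M+1)+1 from rfl, Finset.sum_range_succ']
  push_cast
  -- telescoping sum
  have tele : ∑ j ∈ Finset.range (M+1), (1/((j:ℝ)+1)^2 - 1/((j:ℝ)+2)^2)
      = 1 - 1/((M:ℝ)+2)^2 := by
    have h := Finset.sum_range_sub' (f := fun j : ℕ => 1/((j:ℝ)+1)^2) (M+1)
    push_cast at h
    calc ∑ j ∈ Finset.range (M+1), (1/((j:ℝ)+1)^2 - 1/((j:ℝ)+2)^2)
        = ∑ j ∈ Finset.range (M+1), (1/((j:ℝ)+1)^2 - 1/((j:ℝ)+1+1)^2) := by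
          apply Finset.sum_congr rfl; intro j _; ring_nf
      _ = 1/((0:ℝ)+1)^2 - 1/((M:ℝ)+1+1)^2 := h
      _ = 1 - 1/((M:ℝ)+2)^2 := by norm_num; ring_nf
  have key : ∑ j ∈ Finset.range (M+1), ((1/((M:ℝ)+1)^2) * (1/((j:ℝ)+1)^2 - 1/((j:ℝ)+2)^2))
      ≤ ∑ j ∈ Finset.range (M+1),
        ((((1 + (j:ℝ)) * ((M:ℝ) + 2 - (1 + (j:ℝ)))) ^ 2)⁻¹ -
         (((1 + ((j:ℝ) + 1)) * ((M:ℝ) + 2 + 1 - (1 + ((j:ℝ) + 1)))) ^ 2)⁻¹) := by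
    apply Finset.sum_le_sum
    intro j hj
    have hj' : (j:ℝ) ≤ (M:ℝ) := by
      have := Finset.mem_range.mp hj; exact_mod_cast Nat.lt_succ_iff.mp this
    have hpt := per_term (M:ℝ) (j:ℝ) (by positivity) hj'
    have e1 : ((1 + (j:ℝ)) * ((M:ℝ) + 2 - (1 + (j:ℝ)))) = ((j:ℝ)+1)*((M:ℝ)+1-(j:ℝ)) := by ring
    have e2 : ((1 + ((j:ℝ) + 1)) * ((M:ℝ) + 2 + 1 - (1 + ((j:ℝ) + 1))))
        = ((j:ℝ)+2)*((M:ℝ)+1-(j:ℝ)) := by ring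
    rw [e1, e2]
    simpa [one_div] using hpt
  rw [Finset.sum_sub_distrib, ← Finset.mul_sum, tele] at key
  have hfin : (((1 + (0:ℝ)) * ((M:ℝ) + 2 + 1 - (1 + 0))) ^ 2)⁻¹
      < (1/((M:ℝ)+1)^2) * (1 - 1/((M:ℝ)+2)^2) := by
    have h1 : (0:ℝ) < ((M:ℝ)+1)^2 := by positivity
    have h2 : (0:ℝ) < ((M:ℝ)+2)^2 := by positivity
    rw [show (1 + (0:ℝ)) * ((M:ℝ) + 2 + 1 - (1 + 0)) = (M:ℝ)+2 by ring, ← one_div,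
      one_sub_div (ne_of_gt h2), div_mul_div_comm, one_mul,
      div_lt_div_iff₀ h2 (by positivity)]
    nlinarith [mul_pos h2 (show (0:ℝ) < 2*(M:ℝ)+2 by positivity)]
  linarith
end

section
/- For β ∈ (0,1), λ > 0, N ≥ 2, let Z = ∑_{i=1}^{N−1} Z_i where Z_i are independent exponential with rates λNi, and set t* = (1/(λN))(log(N−1) − log(log(1/β))). Then P(Z > t*) = 1 − (1 + log β/(N−1))^{N−1}, and consequently P(Z > t*) → 1 − β as N → ∞. -/
/-!
The sum of independent exponential variables of rates `c, 2c, …, kc` has distribution function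
`expMaxCDF c k t = (1 - exp (-c t)) ^ k` on `t ≥ 0`, that of the maximum of `k` i.i.d. `Exp(c)`
variables (Rényi's representation).
This follows by induction on `k`: convolving with `Exp(c (k + 1))` gives
`∫₀ᵗ c (k+1) e^{-c(k+1)y} (1 - e^{-c(t-y)})^k dy = (1 - e^{-ct})^{k+1}`.
At `t*` one has `exp (-λ N t*) = log (1/β) / (N - 1)`, which gives the closed form, and the limit
is `(1 + x/n)^n → eˣ`.
-/

open MeasureTheory ProbabilityTheory Filter Real Set

noncomputable def expMaxCDF (c : ℝ) (k : ℕ) (t : ℝ) : ℝ :=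
  if 0 ≤ t then (1 - exp (-(c * t))) ^ k else 0

theorem integral_exp_mul_one_sub_exp_pow (c t : ℝ) (k : ℕ) :
    ∫ y in (0)..t, c * (k + 1) * exp (-(c * (k + 1) * y)) * (1 - exp (-(c * (t - y)))) ^ k
      = (1 - exp (-(c * t))) ^ (k + 1) := by
  -- with `u = exp (-(c * y))` the integrand is `-(k + 1) (u - exp (-(c * t))) ^ k u'`
  have hintegrand : ∀ y, exp (-(c * (k + 1) * y)) * (1 - exp (-(c * (t - y)))) ^ k
      = exp (-(c * y)) * (exp (-(c * y)) - exp (-(c * t))) ^ k := by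
    intro y
    have h₁ : exp (-(c * (k + 1) * y)) = exp (-(c * y)) * exp (-(c * y)) ^ k := by
      rw [← exp_nat_mul, ← exp_add]; ring_nf
    have h₂ : exp (-(c * y)) * exp (-(c * (t - y))) = exp (-(c * t)) := by
      rw [← exp_add]; ring_nf
    rw [h₁, mul_assoc, ← mul_pow, mul_sub, mul_one, h₂]
  have hderiv : ∀ y, HasDerivAt (fun y => -(exp (-(c * y)) - exp (-(c * t))) ^ (k + 1))
      (c * (k + 1) * exp (-(c * (k + 1) * y)) * (1 - exp (-(c * (t - y)))) ^ k) y := by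
    intro y
    have h : HasDerivAt (fun y => exp (-(c * y)) - exp (-(c * t)))
        (-(c * exp (-(c * y)))) y := by
      simpa [mul_comm] using (((hasDerivAt_id y).const_mul c).neg.exp).sub_const (exp (-(c * t)))
    refine (h.pow (k + 1)).neg.congr_deriv ?_
    rw [mul_assoc _ (exp _), hintegrand, Nat.add_sub_cancel]
    push_cast
    ring
  rw [intervalIntegral.integral_eq_sub_of_hasDerivAt (fun y _ => hderiv y)
    (Continuous.intervalIntegrable (by fun_prop) _ _)]
  simp

theorem conv_apply_Iic (ν μ : Measure ℝ) [SFinite ν] [SFinite μ] (t : ℝ) :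
    (ν ∗ μ) (Iic t) = ∫⁻ y, ν (Iic (t - y)) ∂μ := by
  rw [Measure.conv, Measure.map_apply (by fun_prop) measurableSet_Iic,
    Measure.prod_apply_symm (measurableSet_Iic.preimage (by fun_prop))]
  congr! with y
  ext x
  simp [le_sub_iff_add_le]

theorem conv_expMeasure_Iic {ν : Measure ℝ} [SFinite ν] {c : ℝ} (hc : 0 < c) {k : ℕ}
    (hν : ∀ s, ν (Iic s) = ENNReal.ofReal (expMaxCDF c k s)) (t : ℝ) :
    (ν ∗ expMeasure (c * (k + 1))) (Iic t) = ENNReal.ofReal (expMaxCDF c (k + 1) t) := by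
  set r := c * (k + 1)
  have hr : 0 < r := by positivity
  have := isProbabilityMeasure_expMeasure hr
  have hsupp : ∀ y, exponentialPDF r y * ENNReal.ofReal (expMaxCDF c k (t - y))
      = (Icc 0 t).indicator
          (fun y => ENNReal.ofReal (r * exp (-(r * y)) * (1 - exp (-(c * (t - y)))) ^ k)) y := by
    intro y
    by_cases hy : y ∈ Icc 0 t
    · rw [indicator_of_mem hy, exponentialPDF_of_nonneg hy.1, expMaxCDF,
        if_pos (sub_nonneg.2 hy.2), ← ENNReal.ofReal_mul (by positivity)]
    · rw [indicator_of_notMem hy]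
      rcases not_and_or.1 hy with hy | hy
      · rw [exponentialPDF_of_neg (not_le.1 hy), zero_mul]
      · rw [expMaxCDF, if_neg (by simpa using hy), ENNReal.ofReal_zero, mul_zero]
  rw [conv_apply_Iic]
  simp_rw [hν]
  rw [show expMeasure r = volume.withDensity (exponentialPDF r) from rfl,
    lintegral_withDensity_eq_lintegral_mul_non_measurable (f := exponentialPDF r) _
      (measurable_exponentialPDFReal r).ennreal_ofReal
      (ae_of_all _ fun _ => ENNReal.ofReal_lt_top)]
  simp only [Pi.mul_apply, hsupp]
  rw [lintegral_indicator measurableSet_Icc]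
  rcases lt_or_ge t 0 with ht | ht
  · simp [expMaxCDF, not_le.2 ht]
  have hnonneg : ∀ y ∈ Icc 0 t, 0 ≤ r * exp (-(r * y)) * (1 - exp (-(c * (t - y)))) ^ k :=
    fun y hy => mul_nonneg (by positivity) (pow_nonneg (sub_nonneg.2 (exp_le_one_iff.2
      (neg_nonpos.2 (mul_nonneg hc.le (sub_nonneg.2 hy.2))))) k)
  rw [← ofReal_integral_eq_lintegral_ofReal (Continuous.integrableOn_Icc (by fun_prop))
      ((ae_restrict_iff' measurableSet_Icc).2 (ae_of_all _ hnonneg)),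
    integral_Icc_eq_integral_Ioc, ← intervalIntegral.integral_of_le ht,
    integral_exp_mul_one_sub_exp_pow, expMaxCDF, if_pos ht]

theorem hasLaw_expMeasure_of_measure_lt {Ω : Type*} [MeasurableSpace Ω] {P : Measure Ω}
    [IsProbabilityMeasure P] {X : Ω → ℝ} (hX : Measurable X) {r : ℝ} (hr : 0 < r)
    (h : ∀ x, 0 ≤ x → P {ω | x < X ω} = ENNReal.ofReal (exp (-r * x))) :
    HasLaw X (expMeasure r) P := by
  have := isProbabilityMeasure_expMeasure hr
  refine ⟨hX.aemeasurable, Measure.ext_of_Iic _ _ fun a => ?_⟩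
  have hcompl : P.map X (Iic a) = 1 - P {ω | a < X ω} := by
    rw [Measure.map_apply hX measurableSet_Iic, ← prob_compl_eq_one_sub
      (measurableSet_lt measurable_const hX)]
    congr with ω
    simp
  rw [hcompl, ← ofReal_cdf, cdf_expMeasure_eq hr]
  rcases le_or_gt 0 a with ha | ha
  · rw [h a ha, if_pos ha, ← ENNReal.ofReal_one, ← ENNReal.ofReal_sub _ (exp_nonneg _),
      neg_mul]
  have h0 : P {ω | 0 < X ω} = 1 := by simpa using h 0 le_rfl
  rw [if_neg (not_le.2 ha), ENNReal.ofReal_zero, tsub_eq_zero_iff_le, ← h0]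
  exact measure_mono fun ω hω => ha.trans hω

theorem map_sum_Iic_eq_expMaxCDF {Ω : Type*} [MeasurableSpace Ω] {P : Measure Ω}
    [IsProbabilityMeasure P] {c : ℝ} (hc : 0 < c) {m : ℕ} {Z : Fin m → Ω → ℝ}
    (hindep : iIndepFun Z P) (hZ : ∀ i, HasLaw (Z i) (expMeasure (c * ((i : ℕ) + 1))) P)
    (t : ℝ) : P.map (∑ i, Z i) (Iic t) = ENNReal.ofReal (expMaxCDF c m t) := by
  induction m generalizing t with
  | zero =>
    rw [Finset.univ_eq_empty, Finset.sum_empty, Pi.zero_def, Measure.map_const]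
    by_cases ht : 0 ≤ t <;> simp [expMaxCDF, ht]
  | succ m ih =>
    have hlast : HasLaw (Z (Fin.last m)) (expMeasure (c * (m + 1))) P := by
      simpa using hZ (Fin.last m)
    have hindep_last : IndepFun (∑ i : Fin m, Z i.castSucc) (Z (Fin.last m)) P := by
      simpa [Finset.sum_map] using hindep.indepFun_finsetSum_of_notMem₀
        (fun i => (hZ i).aemeasurable) (s := Finset.univ.map Fin.castSuccEmb) (by simp)
    have := isProbabilityMeasure_expMeasure (show 0 < c * (m + 1) by positivity)
    have hsum := hindep_last.hasLaw_add ⟨by fun_prop, rfl⟩ hlast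
    rw [Fin.sum_univ_castSucc, hsum.map_eq]
    exact conv_expMeasure_Iic hc
      (ih (hindep.precomp (Fin.castSucc_injective m)) fun i => hZ i.castSucc) t

theorem tendsto_one_add_div_sub_one_pow (x : ℝ) :
    Tendsto (fun M : ℕ => (1 + x / ((M : ℝ) - 1)) ^ (M - 1)) atTop (nhds (exp x)) := by
  refine ((tendsto_one_add_div_pow_exp x).comp (tendsto_sub_atTop_nat 1)).congr' ?_
  filter_upwards [eventually_ge_atTop 1] with M hM
  simp [Nat.cast_sub hM]

/-- For `β ∈ (0,1)`, `λ > 0`, `N ≥ 2`, if `Z = ∑_{i=1}^{N−1} Z_i` with `Z_i` independent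
exponential of rate `λNi`, and `t* = (1/(λN))(log(N−1) − log(log(1/β)))`, then
`P(Z > t*) = 1 − (1 + log β/(N−1))^{N−1}`, and this quantity tends to `1 − β` as `N → ∞`. -/
theorem stmt_10 {Ω : Type*} [MeasureSpace Ω] [IsProbabilityMeasure (ℙ : Measure Ω)]
    (β lam : ℝ) (hβ : β ∈ Set.Ioo (0 : ℝ) 1) (hlam : 0 < lam)
    (N : ℕ) (hN : 2 ≤ N) (Z : Fin (N - 1) → Ω → ℝ)
    (hmeas : ∀ i, Measurable (Z i))
    (hindep : iIndepFun Z ℙ)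
    (hexp : ∀ i : Fin (N - 1), ∀ x : ℝ, 0 ≤ x →
      ℙ {ω | x < Z i ω} = ENNReal.ofReal (Real.exp (-(lam * N * ((i : ℕ) + 1)) * x)))
    (hpos : 0 < 1 + Real.log β / ((N : ℝ) - 1)) :
    ℙ {ω | (1 / (lam * N)) * (Real.log ((N : ℝ) - 1) - Real.log (Real.log (1 / β)))
          < ∑ i, Z i ω}
        = ENNReal.ofReal (1 - (1 + Real.log β / ((N : ℝ) - 1)) ^ (N - 1)) ∧
    Tendsto (fun M : ℕ => 1 - (1 + Real.log β / ((M : ℝ) - 1)) ^ (M - 1)) atTop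
      (nhds (1 - β)) := by
  refine ⟨?_, by
    simpa [exp_log hβ.1] using (tendsto_one_add_div_sub_one_pow (log β)).const_sub 1⟩
  set L := log (1 / β)
  have hL : 0 < L := log_pos (one_lt_one_div hβ.1 hβ.2)
  have hlogβ : log β = -L := by simp [L]
  have hN1 : (0 : ℝ) < N - 1 := by
    have : (2 : ℝ) ≤ N := by exact_mod_cast hN
    linarith
  have hLN : L < N - 1 := by
    rwa [hlogβ, neg_div, ← sub_eq_add_neg, sub_pos, div_lt_one hN1] at hpos
  have hc : 0 < lam * N := by positivity
  set t := 1 / (lam * N) * (log (N - 1) - log L)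
  have ht : 0 ≤ t := mul_nonneg (by positivity) (sub_nonneg.2 (log_le_log hL hLN.le))
  have hexp_t : exp (-(lam * N * t)) = L / (N - 1) := by
    rw [show lam * N * t = log (N - 1) - log L by simp only [t]; field_simp, neg_sub, exp_sub,
      exp_log hL, exp_log hN1]
  have hcdf := map_sum_Iic_eq_expMaxCDF hc hindep
    (fun i => hasLaw_expMeasure_of_measure_lt (hmeas i) (by positivity) (hexp i)) t
  rw [Measure.map_apply (by fun_prop) measurableSet_Iic, expMaxCDF, if_pos ht, hexp_t] at hcdf
  have hset : {ω | t < ∑ i, Z i ω} = ((∑ i, Z i) ⁻¹' Iic t)ᶜ := by ext; simp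
  have hbase : 0 ≤ 1 - L / (N - 1) := sub_nonneg.2 ((div_le_one hN1).2 hLN.le)
  rw [hset, prob_compl_eq_one_sub (measurableSet_Iic.preimage (by fun_prop)), hcdf,
    ← ENNReal.ofReal_one, ← ENNReal.ofReal_sub _ (pow_nonneg hbase _), hlogβ, neg_div,
    ← sub_eq_add_neg]
end

section
/- Let X_i, Y_i (i = 1,…,(N−1)/2, N odd) be independent exponential random variables with rates i(N−i)λ, and let T = ∑_i (X_i + Y_i). Let Z_1^u,…,Z_{N−1}^u be independent exponentials with rates λNi/4 and T_upper = ∑_{i=1}^{N−1} Z_i^u. Then T is stochastically dominated by T_upper: P(T > x) ≤ P(T_upper > x) for all x ∈ ℝ. -/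
/-!
Match `X_i` with `Z_{2i-1}` and `Y_i` with `Z_{2i}` (1-indexed). Since `2i ≤ N`, the rate
`i(N-i)λ` of `X_i` and `Y_i` is at least `λN(2i)/4 ≥ λN(2i-1)/4`, so each summand of `T` is
stochastically dominated by its partner. Stochastic dominance of laws on `ℝ` is preserved by
convolution, because the tail of `μ ∗ ν` at `x` is `∫ ν (x - t, ∞) dμ(t)`, and the law of a sum of
independent variables is the convolution of their laws.
-/

open MeasureTheory ProbabilityTheory Set

lemma MeasureTheory.Measure.conv_apply_Ioi (μ ν : Measure ℝ) [SFinite ν] (x : ℝ) :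
    (μ ∗ ν) (Ioi x) = ∫⁻ t, ν (Ioi (x - t)) ∂μ := by
  rw [Measure.conv, Measure.map_apply measurable_add measurableSet_Ioi,
    Measure.prod_apply (measurable_add measurableSet_Ioi)]
  congr! 2 with t
  congr 1
  ext y
  simp [sub_lt_iff_lt_add']

lemma MeasureTheory.Measure.map_apply_Ioi {Ω : Type*} {_ : MeasurableSpace Ω} (μ : Measure Ω)
    {f : Ω → ℝ} (hf : Measurable f) (x : ℝ) : μ.map f (Ioi x) = μ {ω | x < f ω} :=
  Measure.map_apply hf measurableSet_Ioi

def StochLE (μ ν : Measure ℝ) : Prop := ∀ x, μ (Ioi x) ≤ ν (Ioi x)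

namespace StochLE

variable {μ μ' ν ν' ρ : Measure ℝ}

lemma refl (μ : Measure ℝ) : StochLE μ μ := fun _ ↦ le_rfl

lemma trans (h₁ : StochLE μ ν) (h₂ : StochLE ν ρ) : StochLE μ ρ :=
  fun x ↦ (h₁ x).trans (h₂ x)

lemma conv_right [SFinite ν] [SFinite ν'] (h : StochLE ν ν') (μ : Measure ℝ) :
    StochLE (μ ∗ ν) (μ ∗ ν') := fun x ↦ by
  simpa only [Measure.conv_apply_Ioi] using lintegral_mono fun t ↦ h (x - t)

lemma conv [SFinite μ] [SFinite μ'] [SFinite ν] [SFinite ν'] (hμ : StochLE μ μ')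
    (hν : StochLE ν ν') : StochLE (μ ∗ ν) (μ' ∗ ν') := by
  refine (hν.conv_right μ).trans ?_
  rw [Measure.conv_comm μ, Measure.conv_comm μ']
  exact hμ.conv_right ν'

end StochLE

lemma stochLE_map_iff {Ω Ω' : Type*} {_ : MeasurableSpace Ω} {_ : MeasurableSpace Ω'}
    {μ : Measure Ω} {ν : Measure Ω'} {f : Ω → ℝ} {g : Ω' → ℝ} (hf : Measurable f)
    (hg : Measurable g) :
    StochLE (μ.map f) (ν.map g) ↔ ∀ x, μ {ω | x < f ω} ≤ ν {ω | x < g ω} := by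
  simp only [StochLE, Measure.map_apply_Ioi _ hf, Measure.map_apply_Ioi _ hg]

lemma stochLE_of_exp_tail {μ ν : Measure ℝ} [IsZeroOrProbabilityMeasure μ] {a b : ℝ} (hba : b ≤ a)
    (hμ : ∀ x, 0 ≤ x → μ (Ioi x) = ENNReal.ofReal (Real.exp (-a * x)))
    (hν : ∀ x, 0 ≤ x → ν (Ioi x) = ENNReal.ofReal (Real.exp (-b * x))) : StochLE μ ν := by
  intro x
  rcases le_or_gt 0 x with hx | hx
  · rw [hμ x hx, hν x hx]
    gcongr
  · calc μ (Ioi x) ≤ 1 := prob_le_one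
      _ = ν (Ioi 0) := by simp [hν 0 le_rfl]
      _ ≤ ν (Ioi x) := measure_mono (Ioi_subset_Ioi hx.le)

lemma stochLE_map_sum {ι Ω Ω' : Type*} {_ : MeasurableSpace Ω} {_ : MeasurableSpace Ω'}
    {μ : Measure Ω} {ν : Measure Ω'} [IsProbabilityMeasure μ] [IsProbabilityMeasure ν]
    {f : ι → Ω → ℝ} {g : ι → Ω' → ℝ} (hf : ∀ i, Measurable (f i)) (hg : ∀ i, Measurable (g i))
    (hfi : iIndepFun f μ) (hgi : iIndepFun g ν) (h : ∀ i, StochLE (μ.map (f i)) (ν.map (g i)))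
    (s : Finset ι) : StochLE (μ.map (∑ i ∈ s, f i)) (ν.map (∑ i ∈ s, g i)) := by
  classical
  induction s using Finset.induction_on with
  | empty =>
    simp only [Finset.sum_empty, Pi.zero_def, Measure.map_const, measure_univ]
    exact .refl _
  | insert a s ha ih =>
    rw [Finset.sum_insert ha, Finset.sum_insert ha,
      (hfi.indepFun_finsetSum_of_notMem hf ha).symm.map_add_eq_map_conv_map (hf a) (by fun_prop),
      (hgi.indepFun_finsetSum_of_notMem hg ha).symm.map_add_eq_map_conv_map (hg a) (by fun_prop)]
    exact (h a).conv ih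

lemma rate_le {N j m lam : ℝ} (hlam : 0 ≤ lam) (hj : 0 ≤ j) (hjN : 2 * j ≤ N) (hm : m ≤ 2 * j) :
    lam * N * m / 4 ≤ j * (N - j) * lam := by
  nlinarith [mul_nonneg (mul_nonneg hlam hj) (by linarith : 0 ≤ N - 2 * j),
    mul_le_mul_of_nonneg_left hm (mul_nonneg hlam (by linarith : 0 ≤ N))]

def interleave {k n : ℕ} (h : 2 * k = n) : Fin k ⊕ Fin k → Fin n :=
  Sum.elim (fun i ↦ ⟨2 * i, by omega⟩) (fun i ↦ ⟨2 * i + 1, by omega⟩)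

lemma interleave_bijective {k n : ℕ} (h : 2 * k = n) : (interleave h).Bijective := by
  refine (Fintype.bijective_iff_injective_and_card _).mpr ⟨?_, by simp [← h, two_mul]⟩
  rintro (i | i) (j | j) hij <;> simp [interleave, Fin.ext_iff] at hij ⊢ <;> omega

lemma stochLE_exp_rate {μ ν : Measure ℝ} [IsZeroOrProbabilityMeasure μ] {N i j : ℕ} {lam : ℝ}
    (hlam : 0 ≤ lam) (hiN : 2 * (i + 1) ≤ N) (hji : j ≤ 2 * i + 1)
    (hμ : ∀ x, 0 ≤ x → μ (Ioi x) =
      ENNReal.ofReal (Real.exp (-((i + 1) * ((N : ℝ) - (i + 1)) * lam) * x)))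
    (hν : ∀ x, 0 ≤ x → ν (Ioi x) = ENNReal.ofReal (Real.exp (-(lam * N * (j + 1) / 4) * x))) :
    StochLE μ ν :=
  stochLE_of_exp_tail (rate_le hlam (by positivity) (by exact_mod_cast hiN)
    (by exact_mod_cast (by omega : j + 1 ≤ 2 * (i + 1)))) hμ hν

theorem stmt_12_general {Ω₁ Ω₂ : Type*} [MeasureSpace Ω₁] [MeasureSpace Ω₂]
    [IsProbabilityMeasure (ℙ : Measure Ω₁)] [IsProbabilityMeasure (ℙ : Measure Ω₂)]
    (N : ℕ) (hodd : Odd N) (lam : ℝ) (hlam : 0 < lam)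
    (X Y : Fin ((N - 1) / 2) → Ω₁ → ℝ) (Zu : Fin (N - 1) → Ω₂ → ℝ)
    (hXmeas : ∀ i, Measurable (X i)) (hYmeas : ∀ i, Measurable (Y i))
    (hZmeas : ∀ i, Measurable (Zu i))
    (hindXY : iIndepFun (Sum.elim X Y) ℙ)
    (hindZ : iIndepFun Zu ℙ)
    (hX : ∀ i : Fin ((N - 1) / 2), ∀ x : ℝ, 0 ≤ x →
      ℙ {ω | x < X i ω}
        = ENNReal.ofReal (Real.exp (-(((i : ℕ) + 1) * ((N : ℝ) - ((i : ℕ) + 1)) * lam) * x)))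
    (hY : ∀ i : Fin ((N - 1) / 2), ∀ x : ℝ, 0 ≤ x →
      ℙ {ω | x < Y i ω}
        = ENNReal.ofReal (Real.exp (-(((i : ℕ) + 1) * ((N : ℝ) - ((i : ℕ) + 1)) * lam) * x)))
    (hZ : ∀ i : Fin (N - 1), ∀ x : ℝ, 0 ≤ x →
      ℙ {ω | x < Zu i ω}
        = ENNReal.ofReal (Real.exp (-(lam * N * ((i : ℕ) + 1) / 4) * x))) :
    ∀ x : ℝ, ℙ {ω | x < ∑ i, X i ω + ∑ i, Y i ω} ≤ ℙ {ω | x < ∑ i, Zu i ω} := by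
  have hk : 2 * ((N - 1) / 2) = N - 1 := by obtain ⟨m, rfl⟩ := hodd; omega
  set e := Equiv.ofBijective _ (interleave_bijective hk)
  have hXY : ∀ p, Measurable (Sum.elim X Y p) := Sum.forall.2 ⟨hXmeas, hYmeas⟩
  have hcomp : ∀ p, StochLE (Measure.map (Sum.elim X Y p) ℙ) (Measure.map (Zu (e p)) ℙ) := by
    rintro (i | i) <;>
      refine stochLE_exp_rate hlam.le (i := i) (by omega) (by simp [e, interleave]) (fun x hx ↦ ?_)
        fun x hx ↦ (Measure.map_apply_Ioi _ (hZmeas _) x).trans (hZ _ x hx)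
    exacts [(Measure.map_apply_Ioi _ (hXmeas i) x).trans (hX i x hx),
      (Measure.map_apply_Ioi _ (hYmeas i) x).trans (hY i x hx)]
  have hsum := stochLE_map_sum hXY (fun p ↦ hZmeas (e p)) hindXY (hindZ.precomp e.injective)
    hcomp Finset.univ
  rw [e.sum_comp Zu, stochLE_map_iff (by fun_prop) (by fun_prop)] at hsum
  simpa only [Finset.sum_apply, Fintype.sum_sum_type, Sum.elim_inl, Sum.elim_inr] using hsum

/-- Stochastic upper bound: for odd `N`, independent exponentials `X_i, Y_i`
(`i = 1,…,(N−1)/2`) with rates `i(N−i)λ`, and independent exponentials `Z_i^u`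
(`i = 1,…,N−1`) with rates `λNi/4`, the sum `T = ∑ (X_i + Y_i)` satisfies
`P(T > x) ≤ P(T_upper > x)` for all `x ∈ ℝ`. -/
theorem stmt_12 {Ω₁ Ω₂ : Type*} [MeasureSpace Ω₁] [MeasureSpace Ω₂]
    [IsProbabilityMeasure (ℙ : Measure Ω₁)] [IsProbabilityMeasure (ℙ : Measure Ω₂)]
    (N : ℕ) (hodd : Odd N) (hN : 3 ≤ N) (lam : ℝ) (hlam : 0 < lam)
    (X Y : Fin ((N - 1) / 2) → Ω₁ → ℝ) (Zu : Fin (N - 1) → Ω₂ → ℝ)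
    (hXmeas : ∀ i, Measurable (X i)) (hYmeas : ∀ i, Measurable (Y i))
    (hZmeas : ∀ i, Measurable (Zu i))
    (hindXY : iIndepFun (Sum.elim X Y) ℙ)
    (hindZ : iIndepFun Zu ℙ)
    (hX : ∀ i : Fin ((N - 1) / 2), ∀ x : ℝ, 0 ≤ x →
      ℙ {ω | x < X i ω}
        = ENNReal.ofReal (Real.exp (-(((i : ℕ) + 1) * ((N : ℝ) - ((i : ℕ) + 1)) * lam) * x)))
    (hY : ∀ i : Fin ((N - 1) / 2), ∀ x : ℝ, 0 ≤ x →
      ℙ {ω | x < Y i ω}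
        = ENNReal.ofReal (Real.exp (-(((i : ℕ) + 1) * ((N : ℝ) - ((i : ℕ) + 1)) * lam) * x)))
    (hZ : ∀ i : Fin (N - 1), ∀ x : ℝ, 0 ≤ x →
      ℙ {ω | x < Zu i ω}
        = ENNReal.ofReal (Real.exp (-(lam * N * ((i : ℕ) + 1) / 4) * x))) :
    ∀ x : ℝ, ℙ {ω | x < ∑ i, X i ω + ∑ i, Y i ω} ≤ ℙ {ω | x < ∑ i, Zu i ω} :=
  stmt_12_general N hodd lam hlam X Y Zu hXmeas hYmeas hZmeas hindXY hindZ hX hY hZ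
end
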